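/- arXiv:2603.06435 — 4 statements merged into one kernel-verified Lean document; each statement's English description precedes it below -/
import Mathlib

section
/- For a > 0, the function U(x,y) = (2/π)·arctan(x/(y+a)) satisfies the nonlinear Neumann boundary condition -∂U/∂y(x,0) = (1/(πa))·sin(π U(x,0)) for all real x. -/
open Real

theorem layer_solution_neumann (a : ℝ) (ha : 0 < a) :
    ∀ x : ℝ,
      -(deriv (fun t : ℝ => (2 / Real.pi) * Real.arctan (x / (t + a))) 0)
        = (1 / (Real.pi * a)) *
            Real.sin (Real.pi * ((2 / Real.pi) * Real.arctan (x / a))) := by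
  intro x
  have ha' : a ≠ 0 := ha.ne'
  have h1 : HasDerivAt (fun t : ℝ => t + a) 1 0 := (hasDerivAt_id 0).add_const a
  have h2 : HasDerivAt (fun t : ℝ => x / (t + a))
      ((0 * (0 + a) - x * 1) / (0 + a) ^ 2) 0 :=
    (hasDerivAt_const 0 x).div h1 (by simpa using ha')
  have h3 : HasDerivAt (fun t : ℝ => Real.arctan (x / (t + a)))
      ((1 / (1 + (x / (0 + a)) ^ 2)) * ((0 * (0 + a) - x * 1) / (0 + a) ^ 2)) 0 :=
    (Real.hasDerivAt_arctan (x / (0 + a))).comp (h := fun t : ℝ => x / (t + a)) 0 h2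
  have h4 : HasDerivAt (fun t : ℝ => (2 / Real.pi) * Real.arctan (x / (t + a)))
      ((2 / Real.pi) * ((1 / (1 + (x / (0 + a)) ^ 2)) * ((0 * (0 + a) - x * 1) / (0 + a) ^ 2))) 0 :=
    h3.const_mul _
  rw [h4.deriv]
  have hpi : Real.pi ≠ 0 := Real.pi_ne_zero
  have harg : Real.pi * ((2 / Real.pi) * Real.arctan (x / a)) = 2 * Real.arctan (x / a) := by
    field_simp
  rw [harg, Real.sin_two_mul, Real.sin_arctan, Real.cos_arctan]
  have hs : Real.sqrt (1 + (x / a) ^ 2) * Real.sqrt (1 + (x / a) ^ 2) = 1 + (x / a) ^ 2 :=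
    Real.mul_self_sqrt (by positivity)
  have hs0 : Real.sqrt (1 + (x / a) ^ 2) ≠ 0 := by positivity
  have hd : (1 : ℝ) + (x / a) ^ 2 ≠ 0 := by positivity
  field_simp
  rw [Real.sq_sqrt (by positivity)]
  field_simp
  ring_nf
end

section
/- Let 0 < S < R and let A⁺ = {(x,y) : y > 0, S < x²+y² < R²} be the upper half-annulus, and let V ∈ H¹(A⁺) have boundary trace on the segments {S ≤ |x| ≤ R, y=0} with values in [-1,1]. Then (1/2)∫_{A⁺}|∇V|² dxdy = (2/π)·log(R/S) - (2/π)∫_{S≤|x|≤R} |V(x,0) - (2/π)θ⁰(x,0) + 1|/|x| dx + (1/2)∫_{A⁺}|∇(V - (2/π)θ⁰)|² dxdy. -/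
open Real MeasureTheory Set

/-- The argument function on the closed upper half-plane, with boundary values
`0` for `x > 0` and `π` for `x < 0`. -/
noncomputable def theta0 (p : ℝ × ℝ) : ℝ :=
  if 0 < p.2 then Real.pi / 2 - Real.arctan (p.1 / p.2)
  else if 0 < p.1 then 0 else Real.pi

def Ann (S R : ℝ) : Set (ℝ × ℝ) :=
  {p : ℝ × ℝ | 0 < p.2 ∧ S ^ 2 < p.1 ^ 2 + p.2 ^ 2 ∧ p.1 ^ 2 + p.2 ^ 2 < R ^ 2}

noncomputable def uX (p : ℝ × ℝ) : ℝ := (2 / Real.pi) * (-p.2 / (p.1 ^ 2 + p.2 ^ 2))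
noncomputable def uY (p : ℝ × ℝ) : ℝ := (2 / Real.pi) * (p.1 / (p.1 ^ 2 + p.2 ^ 2))



lemma theta0_hasFDerivAt (p : ℝ × ℝ) (hp : 0 < p.2) :
    HasFDerivAt theta0
      ((-p.2 / (p.1 ^ 2 + p.2 ^ 2)) • ContinuousLinearMap.fst ℝ ℝ ℝ
        + (p.1 / (p.1 ^ 2 + p.2 ^ 2)) • ContinuousLinearMap.snd ℝ ℝ ℝ) p := by
  have h2 : p.2 ≠ 0 := ne_of_gt hp
  have hρ : p.1 ^ 2 + p.2 ^ 2 ≠ 0 := by positivity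
  have hinv : HasFDerivAt (fun w : ℝ × ℝ => (w.2)⁻¹)
      ((-(p.2 ^ 2)⁻¹) • ContinuousLinearMap.snd ℝ ℝ ℝ) p :=
    (hasDerivAt_inv h2).comp_hasFDerivAt p hasFDerivAt_snd
  have hdiv : HasFDerivAt (fun w : ℝ × ℝ => w.1 * (w.2)⁻¹)
      (p.1 • ((-(p.2 ^ 2)⁻¹) • ContinuousLinearMap.snd ℝ ℝ ℝ)
        + (p.2)⁻¹ • ContinuousLinearMap.fst ℝ ℝ ℝ) p :=
    (hasFDerivAt_fst (𝕜 := ℝ) (p := p)).mul hinv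
  have harc : HasFDerivAt (fun w : ℝ × ℝ => Real.arctan (w.1 * (w.2)⁻¹))
      ((1 / (1 + (p.1 * (p.2)⁻¹) ^ 2)) •
        (p.1 • ((-(p.2 ^ 2)⁻¹) • ContinuousLinearMap.snd ℝ ℝ ℝ)
          + (p.2)⁻¹ • ContinuousLinearMap.fst ℝ ℝ ℝ)) p :=
    HasDerivAt.comp_hasFDerivAt (h₂ := Real.arctan) (f := fun w : ℝ × ℝ => w.1 * (w.2)⁻¹) p
      (Real.hasDerivAt_arctan (p.1 * (p.2)⁻¹)) hdiv
  have hmain := (hasFDerivAt_const (Real.pi / 2) p).sub harc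
  have heq : theta0 =ᶠ[nhds p] fun w : ℝ × ℝ => Real.pi / 2 - Real.arctan (w.1 * (w.2)⁻¹) := by
    filter_upwards [IsOpen.mem_nhds (isOpen_lt continuous_const continuous_snd) hp] with w hw
    simp only [theta0, if_pos (show (0:ℝ) < w.2 from hw), div_eq_mul_inv]
  refine (hmain.congr_of_eventuallyEq heq).congr_fderiv ?_
  apply ContinuousLinearMap.ext
  rintro ⟨v1, v2⟩
  simp only [ContinuousLinearMap.add_apply, ContinuousLinearMap.smul_apply,
    ContinuousLinearMap.sub_apply, ContinuousLinearMap.zero_apply,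
    ContinuousLinearMap.coe_fst', ContinuousLinearMap.coe_snd', smul_eq_mul]
  field_simp
  ring

noncomputable def toPolar (q : ℝ × ℝ) : ℝ × ℝ := (q.1 * Real.cos q.2, q.1 * Real.sin q.2)

lemma toPolar_eq : toPolar = polarCoord.symm := by
  funext q; simp [toPolar]

lemma continuous_toPolar : Continuous toPolar :=
  (continuous_fst.mul (Real.continuous_cos.comp continuous_snd)).prodMk
    (continuous_fst.mul (Real.continuous_sin.comp continuous_snd))

noncomputable def polarB (p : ℝ × ℝ) : ℝ × ℝ →L[ℝ] ℝ × ℝ :=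
  LinearMap.toContinuousLinearMap (Matrix.toLin (Module.Basis.finTwoProd ℝ) (Module.Basis.finTwoProd ℝ)
    !![Real.cos p.2, -p.1 * Real.sin p.2; Real.sin p.2, p.1 * Real.cos p.2])

lemma hasFDerivAt_toPolar (p : ℝ × ℝ) : HasFDerivAt toPolar (polarB p) p := by
  rw [toPolar_eq]; exact hasFDerivAt_polarCoord_symm p

lemma polarB_det (p : ℝ × ℝ) : (polarB p).det = p.1 := by
  conv_rhs => rw [← one_mul p.1, ← Real.cos_sq_add_sin_sq p.2]
  simp only [polarB, neg_mul, LinearMap.det_toContinuousLinearMap, LinearMap.det_toLin,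
    Matrix.det_fin_two_of, sub_neg_eq_add]
  ring

lemma sq_toPolar (r θ : ℝ) : (r * Real.cos θ) ^ 2 + (r * Real.sin θ) ^ 2 = r ^ 2 := by
  linear_combination (r ^ 2) * Real.sin_sq_add_cos_sq θ

lemma toPolar_image (S R : ℝ) (hS : 0 < S) (hR : 0 < R) :
    toPolar '' (Ioo S R ×ˢ Ioo 0 Real.pi) = Ann S R := by
  ext p
  simp only [Ann]
  constructor
  · rintro ⟨⟨r, θ⟩, ⟨⟨hr1, hr2⟩, hθ1, hθ2⟩, rfl⟩
    simp only [mem_setOf_eq, toPolar]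
    have hr0 : 0 < r := hS.trans hr1
    have hsin : 0 < Real.sin θ := Real.sin_pos_of_pos_of_lt_pi hθ1 hθ2
    rw [sq_toPolar]
    exact ⟨mul_pos hr0 hsin, by nlinarith, by nlinarith⟩
  · rintro ⟨hy, h1, h2⟩
    have hρ : 0 < p.1 ^ 2 + p.2 ^ 2 := by positivity
    refine ⟨(Real.sqrt (p.1 ^ 2 + p.2 ^ 2), Real.pi / 2 - Real.arctan (p.1 / p.2)),
      ⟨⟨?_, ?_⟩, ?_, ?_⟩, ?_⟩
    · rw [show S = Real.sqrt (S ^ 2) by rw [Real.sqrt_sq hS.le]]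
      exact Real.sqrt_lt_sqrt (by positivity) h1
    · rw [show R = Real.sqrt (R ^ 2) by rw [Real.sqrt_sq hR.le]]
      exact Real.sqrt_lt_sqrt hρ.le h2
    · have := Real.arctan_lt_pi_div_two (p.1 / p.2)
      simp only []
      linarith
    · have := Real.neg_pi_div_two_lt_arctan (p.1 / p.2)
      simp only []
      linarith
    · have hy' : p.2 ≠ 0 := ne_of_gt hy
      have hkey : Real.sqrt (1 + (p.1 / p.2) ^ 2) = Real.sqrt (p.1 ^ 2 + p.2 ^ 2) / p.2 := by
        rw [eq_div_iff hy', ← Real.sqrt_sq hy.le, ← Real.sqrt_mul (by positivity)]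
        congr 1
        field_simp
        simp only [Real.sqrt_sq hy.le]; ring
      have hs0 : 0 < Real.sqrt (p.1 ^ 2 + p.2 ^ 2) := Real.sqrt_pos.2 hρ
      have hs0' : Real.sqrt (p.1 ^ 2 + p.2 ^ 2) ≠ 0 := ne_of_gt hs0
      simp only [toPolar, Real.cos_pi_div_two_sub, Real.sin_pi_div_two_sub,
        Real.sin_arctan, Real.cos_arctan, hkey]
      ext <;> simp only [] <;> field_simp
  
lemma toPolar_injOn (S R : ℝ) (hS : 0 < S) :
    InjOn toPolar (Ioo S R ×ˢ Ioo 0 Real.pi) := by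
  rintro ⟨r, θ⟩ ⟨⟨hr1, _⟩, hθ1, hθ2⟩ ⟨r', θ'⟩ ⟨⟨hr1', _⟩, hθ1', hθ2'⟩ h
  have hr0 : 0 < r := hS.trans hr1
  have hr0' : 0 < r' := hS.trans hr1'
  simp only [toPolar, Prod.mk.injEq] at h
  obtain ⟨h1, h2⟩ := h
  have e : r ^ 2 = r' ^ 2 := by
    rw [← sq_toPolar r θ, ← sq_toPolar r' θ', h1, h2]
  have hrr : r = r' := by
    rw [← Real.sqrt_sq hr0.le, ← Real.sqrt_sq hr0'.le, e]
  subst hrr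
  have hθθ : θ = θ' := Real.injOn_cos ⟨hθ1.le, hθ2.le⟩ ⟨hθ1'.le, hθ2'.le⟩
    (mul_left_cancel₀ (ne_of_gt hr0) h1)
  simp [hθθ]

lemma isOpen_Ann (S R : ℝ) : IsOpen (Ann S R) := by
  have h1 : IsOpen {p : ℝ × ℝ | 0 < p.2} := isOpen_lt continuous_const continuous_snd
  have h2 : IsOpen {p : ℝ × ℝ | S ^ 2 < p.1 ^ 2 + p.2 ^ 2} :=
    isOpen_lt continuous_const ((continuous_fst.pow 2).add (continuous_snd.pow 2))
  have h3 : IsOpen {p : ℝ × ℝ | p.1 ^ 2 + p.2 ^ 2 < R ^ 2} :=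
    isOpen_lt ((continuous_fst.pow 2).add (continuous_snd.pow 2)) continuous_const
  have : Ann S R = ({p : ℝ × ℝ | 0 < p.2} ∩ {p | S ^ 2 < p.1 ^ 2 + p.2 ^ 2})
      ∩ {p | p.1 ^ 2 + p.2 ^ 2 < R ^ 2} := by
    ext p; simp [Ann, and_assoc]
  rw [this]
  exact (h1.inter h2).inter h3

lemma toPolar_mem_closure (S R : ℝ) (hS : 0 < S) (hR : 0 < R) (hSR : S < R)
    {q : ℝ × ℝ} (hq : q ∈ Icc S R ×ˢ Icc 0 Real.pi) :
    toPolar q ∈ closure (Ann S R) := by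
  have h1 : Icc S R ×ˢ Icc 0 Real.pi = closure (Ioo S R ×ˢ Ioo 0 Real.pi) := by
    rw [closure_prod_eq, closure_Ioo (ne_of_lt hSR), closure_Ioo (ne_of_lt Real.pi_pos)]
  rw [h1] at hq
  have := image_closure_subset_closure_image (f := toPolar) continuous_toPolar
    (s := Ioo S R ×ˢ Ioo 0 Real.pi) (mem_image_of_mem toPolar hq)
  rwa [toPolar_image S R hS hR] at this

lemma u_fderiv (c : ℝ) (p : ℝ × ℝ) (hp : 0 < p.2) :
    HasFDerivAt (fun w => c * theta0 w)
      (c • ((-p.2 / (p.1 ^ 2 + p.2 ^ 2)) • ContinuousLinearMap.fst ℝ ℝ ℝ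
        + (p.1 / (p.1 ^ 2 + p.2 ^ 2)) • ContinuousLinearMap.snd ℝ ℝ ℝ)) p :=
  (theta0_hasFDerivAt p hp).const_mul c

lemma u_fderiv_apply₁ (p : ℝ × ℝ) (hp : 0 < p.2) :
    fderiv ℝ (fun w => (2 / Real.pi) * theta0 w) p (1, 0) = uX p := by
  rw [(u_fderiv (2 / Real.pi) p hp).fderiv]
  simp [uX]

lemma u_fderiv_apply₂ (p : ℝ × ℝ) (hp : 0 < p.2) :
    fderiv ℝ (fun w => (2 / Real.pi) * theta0 w) p (0, 1) = uY p := by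
  rw [(u_fderiv (2 / Real.pi) p hp).fderiv]
  simp [uY]

lemma polar_setIntegral (S R : ℝ) (hS : 0 < S) (hR : 0 < R) (f : ℝ × ℝ → ℝ) :
    ∫ p in Ann S R, f p = ∫ q in Ioo S R ×ˢ Ioo 0 Real.pi, q.1 * f (toPolar q) := by
  rw [← toPolar_image S R hS hR,
    integral_image_eq_integral_abs_det_fderiv_smul volume
      (measurableSet_Ioo.prod measurableSet_Ioo)
      (fun q _ => (hasFDerivAt_toPolar q).hasFDerivWithinAt) (toPolar_injOn S R hS) f]
  refine setIntegral_congr_fun (measurableSet_Ioo.prod measurableSet_Ioo) fun q hq => ?_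
  rw [polarB_det, smul_eq_mul, abs_of_pos (hS.trans hq.1.1)]

lemma polar_integrableOn (S R : ℝ) (hS : 0 < S) (hR : 0 < R) (f : ℝ × ℝ → ℝ)
    (hf : IntegrableOn f (Ann S R)) :
    IntegrableOn (fun q => q.1 * f (toPolar q)) (Ioo S R ×ˢ Ioo 0 Real.pi) := by
  rw [← toPolar_image S R hS hR] at hf
  rw [integrableOn_image_iff_integrableOn_abs_det_fderiv_smul volume
      (measurableSet_Ioo.prod measurableSet_Ioo)
      (fun q _ => (hasFDerivAt_toPolar q).hasFDerivWithinAt) (toPolar_injOn S R hS) f] at hf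
  refine hf.congr_fun (fun q hq => ?_) (measurableSet_Ioo.prod measurableSet_Ioo)
  beta_reduce; rw [polarB_det, smul_eq_mul, abs_of_pos (hS.trans hq.1.1)]

lemma volume_Ann_lt_top (S R : ℝ) : volume (Ann S R) < ⊤ := by
  refine lt_of_le_of_lt (measure_mono (show Ann S R ⊆ Metric.closedBall 0 |R| from ?_)) ?_
  · rintro ⟨x, y⟩ ⟨hy, h1, h2⟩
    rw [Metric.mem_closedBall, dist_zero_right, Prod.norm_def]
    simp only at hy h1 h2 ⊢
    have hx2 : x ^ 2 ≤ R ^ 2 := by nlinarith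
    have hy2 : y ^ 2 ≤ R ^ 2 := by nlinarith
    have ex : ‖x‖ = Real.sqrt (x ^ 2) := by rw [Real.sqrt_sq_eq_abs, Real.norm_eq_abs]
    have ey : ‖y‖ = Real.sqrt (y ^ 2) := by rw [Real.sqrt_sq_eq_abs, Real.norm_eq_abs]
    have eR : |R| = Real.sqrt (R ^ 2) := (Real.sqrt_sq_eq_abs R).symm
    rw [max_le_iff, ex, ey, eR]
    exact ⟨Real.sqrt_le_sqrt hx2, Real.sqrt_le_sqrt hy2⟩
  · exact measure_closedBall_lt_top

lemma integrableOn_uSq (S R : ℝ) (hS : 0 < S) :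
    IntegrableOn (fun p => uX p ^ 2 + uY p ^ 2) (Ann S R) := by
  have hmX : Measurable uX := by
    unfold uX
    exact (measurable_snd.neg.div ((measurable_fst.pow_const 2).add
      (measurable_snd.pow_const 2))).const_mul _
  have hmY : Measurable uY := by
    unfold uY
    exact (measurable_fst.div ((measurable_fst.pow_const 2).add
      (measurable_snd.pow_const 2))).const_mul _
  refine Integrable.mono' (g := fun _ => 4 / Real.pi ^ 2 * (S ^ 2)⁻¹)
    (integrableOn_const (volume_Ann_lt_top S R).ne)
    ((hmX.pow_const 2).add (hmY.pow_const 2)).aestronglyMeasurable ?_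
  rw [ae_restrict_iff' (isOpen_Ann S R).measurableSet]
  refine Filter.Eventually.of_forall fun p hp => ?_
  obtain ⟨hy, h1, h2⟩ := hp
  have hρ : (0:ℝ) < p.1 ^ 2 + p.2 ^ 2 := by positivity
  have e : uX p ^ 2 + uY p ^ 2 = 4 / Real.pi ^ 2 * (p.1 ^ 2 + p.2 ^ 2)⁻¹ := by
    have hπ := Real.pi_ne_zero
    simp only [uX, uY]; field_simp
    ring
  rw [Real.norm_eq_abs, abs_of_nonneg (by positivity), e]
  refine mul_le_mul_of_nonneg_left ?_ (by positivity)
  exact inv_anti₀ (by positivity) (by nlinarith)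

lemma integral_inv_Ioo (S R : ℝ) (hS : 0 < S) (hSR : S < R) :
    ∫ r in Ioo S R, r⁻¹ = Real.log (R / S) := by
  rw [← integral_Ioc_eq_integral_Ioo, ← intervalIntegral.integral_of_le hSR.le]
  refine integral_inv ?_
  rw [uIcc_of_le hSR.le]
  rintro ⟨h0, _⟩
  exact absurd h0 (not_le.2 hS)

lemma integral_uSq (S R : ℝ) (hS : 0 < S) (hSR : S < R) :
    ∫ p in Ann S R, (uX p ^ 2 + uY p ^ 2) = (4 / Real.pi) * Real.log (R / S) := by
  have hR : 0 < R := hS.trans hSR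
  rw [polar_setIntegral S R hS hR]
  have hcongr : ∀ q ∈ Ioo S R ×ˢ Ioo 0 Real.pi,
      q.1 * (uX (toPolar q) ^ 2 + uY (toPolar q) ^ 2)
        = (4 / Real.pi ^ 2 * q.1⁻¹) * 1 := by
    rintro ⟨r, θ⟩ ⟨⟨hr1, _⟩, _⟩
    have hr0 : (0:ℝ) < r := hS.trans hr1
    have hπ := Real.pi_ne_zero
    simp only [uX, uY, toPolar, sq_toPolar]
    field_simp
    linear_combination 4 * Real.sin_sq_add_cos_sq θ
  rw [setIntegral_congr_fun (measurableSet_Ioo.prod measurableSet_Ioo) hcongr,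
    Measure.volume_eq_prod,
    setIntegral_prod_mul (fun r => 4 / Real.pi ^ 2 * r⁻¹) (fun _ => (1:ℝ)),
    MeasureTheory.integral_const_mul, integral_inv_Ioo S R hS hSR]
  simp only [integral_const, MeasurableSet.univ, Measure.restrict_apply, univ_inter,
    Real.volume_Ioo, smul_eq_mul, mul_one]
  simp only [Measure.real, Measure.restrict_apply MeasurableSet.univ, univ_inter, Real.volume_Ioo,
    sub_zero, ENNReal.toReal_ofReal Real.pi_pos.le]
  have hπ := Real.pi_ne_zero
  field_simp

lemma cross_integral (S R : ℝ) (hS : 0 < S) (hSR : S < R) (V : ℝ × ℝ → ℝ)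
    (hVc : ContinuousOn V (closure (Ann S R)))
    (hVd : DifferentiableOn ℝ V (Ann S R))
    (hcint : IntegrableOn (fun p => fderiv ℝ V p (1, 0) * uX p + fderiv ℝ V p (0, 1) * uY p)
      (Ann S R)) :
    ∫ p in Ann S R, (fderiv ℝ V p (1, 0) * uX p + fderiv ℝ V p (0, 1) * uY p)
      = (2 / Real.pi) * ∫ r in Ioo S R, (V (-r, 0) - V (r, 0)) / r := by
  have hR : 0 < R := hS.trans hSR
  have hπ : (0:ℝ) < Real.pi := Real.pi_pos
  set g : ℝ × ℝ → ℝ :=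
    fun q => fderiv ℝ V (toPolar q) (-(q.1 * Real.sin q.2), q.1 * Real.cos q.2) with hg
  set h' : ℝ × ℝ → ℝ := fun q => (2 / Real.pi) * (q.1⁻¹ * g q) with hh'
  have hpt : ∀ q ∈ Ioo S R ×ˢ Ioo 0 Real.pi,
      q.1 * (fderiv ℝ V (toPolar q) (1, 0) * uX (toPolar q)
        + fderiv ℝ V (toPolar q) (0, 1) * uY (toPolar q)) = h' q := by
    rintro ⟨r, θ⟩ ⟨⟨hr1, _⟩, _⟩
    have hr0 : (0:ℝ) < r := hS.trans hr1
    have hlin : ∀ L : ℝ × ℝ →L[ℝ] ℝ, L (-(r * Real.sin θ), r * Real.cos θ)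
        = -(r * Real.sin θ) * L (1, 0) + (r * Real.cos θ) * L (0, 1) := by
      intro L
      have e : ((-(r * Real.sin θ), r * Real.cos θ) : ℝ × ℝ)
          = (-(r * Real.sin θ)) • ((1:ℝ), (0:ℝ)) + (r * Real.cos θ) • ((0:ℝ), (1:ℝ)) := by
        simp [Prod.ext_iff]
      rw [e, map_add, L.map_smul, L.map_smul, smul_eq_mul, smul_eq_mul]
    simp only [hh', hg, uX, uY, toPolar, sq_toPolar, hlin]
    field_simp
  rw [polar_setIntegral S R hS hR,
    setIntegral_congr_fun (measurableSet_Ioo.prod measurableSet_Ioo) hpt]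
  have hint' : IntegrableOn h' (Ioo S R ×ˢ Ioo 0 Real.pi) :=
    (polar_integrableOn S R hS hR _ hcint).congr_fun hpt
      (measurableSet_Ioo.prod measurableSet_Ioo)
  rw [IntegrableOn, Measure.volume_eq_prod, ← Measure.prod_restrict] at hint'
  rw [Measure.volume_eq_prod, ← Measure.prod_restrict, MeasureTheory.integral_prod _ hint']
  have hsec := hint'.prod_right_ae
  have hmem : ∀ᵐ r ∂(volume.restrict (Ioo S R)), r ∈ Ioo S R :=
    ae_restrict_mem measurableSet_Ioo
  have hFTC : ∀ r ∈ Ioo S R, Integrable (fun θ => h' (r, θ)) (volume.restrict (Ioo 0 Real.pi)) →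
      ∫ θ in Ioo 0 Real.pi, h' (r, θ)
        = (2 / Real.pi) * ((V (-r, 0) - V (r, 0)) / r) := by
    intro r hr hInt
    have hr0 : (0:ℝ) < r := hS.trans hr.1
    have hr0' : r ≠ 0 := ne_of_gt hr0
    have e1 : ∀ θ : ℝ, h' (r, θ) = (2 / Real.pi * r⁻¹) * g (r, θ) := by
      intro θ; simp only [hh']; ring
    have gInt : IntegrableOn (fun θ => g (r, θ)) (Ioo 0 Real.pi) := by
      have e2 : (fun θ => g (r, θ)) = fun θ => (Real.pi / 2 * r) * h' (r, θ) := by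
        funext θ
        rw [e1]
        field_simp
      rw [e2]
      exact hInt.const_mul _
    have hFTCinner : ∫ θ in Ioo 0 Real.pi, g (r, θ) = V (-r, 0) - V (r, 0) := by
      rw [← integral_Ioc_eq_integral_Ioo, ← intervalIntegral.integral_of_le Real.pi_pos.le]
      have hW : ∫ θ in (0:ℝ)..Real.pi, g (r, θ)
          = V (toPolar (r, Real.pi)) - V (toPolar (r, 0)) := by
        refine intervalIntegral.integral_eq_sub_of_hasDeriv_right_of_le
          (f := fun θ => V (toPolar (r, θ))) Real.pi_pos.le ?_ ?_ ?_
        · refine hVc.comp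
            (continuous_toPolar.comp (continuous_const.prodMk continuous_id)).continuousOn ?_
          intro θ hθ
          exact toPolar_mem_closure S R hS hR hSR ⟨⟨hr.1.le, hr.2.le⟩, hθ⟩
        · intro θ hθ
          have hp : toPolar (r, θ) ∈ Ann S R := by
            rw [← toPolar_image S R hS hR]
            exact mem_image_of_mem _ ⟨hr, hθ⟩
          have hVp : HasFDerivAt V (fderiv ℝ V (toPolar (r, θ))) (toPolar (r, θ)) :=
            (hVd.differentiableAt ((isOpen_Ann S R).mem_nhds hp)).hasFDerivAt
          have h1 : HasDerivAt (fun t : ℝ => r * Real.cos t) (-(r * Real.sin θ)) θ := by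
            simpa using (Real.hasDerivAt_cos θ).const_mul r
          have h2 : HasDerivAt (fun t : ℝ => r * Real.sin t) (r * Real.cos θ) θ := by
            simpa using (Real.hasDerivAt_sin θ).const_mul r
          have hcurve : HasDerivAt (fun t : ℝ => toPolar (r, t))
              (-(r * Real.sin θ), r * Real.cos θ) θ := h1.prodMk h2
          exact ((hVp.comp_hasDerivAt θ hcurve).hasDerivWithinAt)
        · rw [intervalIntegrable_iff, uIoc_of_le Real.pi_pos.le,
            integrableOn_Ioc_iff_integrableOn_Ioo]
          exact gInt
      rw [hW]
      congr 1 <;> simp [toPolar]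
    calc ∫ θ in Ioo 0 Real.pi, h' (r, θ)
        = ∫ θ in Ioo 0 Real.pi, (2 / Real.pi * r⁻¹) * g (r, θ) := by simp only [e1]
      _ = (2 / Real.pi * r⁻¹) * ∫ θ in Ioo 0 Real.pi, g (r, θ) :=
          MeasureTheory.integral_const_mul _ _
      _ = (2 / Real.pi) * ((V (-r, 0) - V (r, 0)) / r) := by
          rw [hFTCinner]; field_simp
  calc (∫ r, ∫ θ, h' (r, θ) ∂(volume.restrict (Ioo 0 Real.pi)) ∂(volume.restrict (Ioo S R)))
      = ∫ r in Ioo S R, (2 / Real.pi) * ((V (-r, 0) - V (r, 0)) / r) := by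
        refine integral_congr_ae ?_
        filter_upwards [hsec, hmem] with r h1 h2
        exact hFTC r h2 h1
    _ = (2 / Real.pi) * ∫ r in Ioo S R, (V (-r, 0) - V (r, 0)) / r :=
        MeasureTheory.integral_const_mul _ _

lemma boundary_integral (S R : ℝ) (hS : 0 < S) (hSR : S < R) (V : ℝ × ℝ → ℝ)
    (hVc : ContinuousOn V (closure (Ann S R)))
    (hVb : ∀ x : ℝ, S ≤ |x| → |x| ≤ R → |V (x, 0)| ≤ 1) :
    ∫ x in {x : ℝ | S ≤ |x| ∧ |x| ≤ R},
        |V (x, 0) - (2 / Real.pi) * theta0 (x, 0) + 1| / |x|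
      = 2 * Real.log (R / S) - ∫ r in Ioo S R, (V (-r, 0) - V (r, 0)) / r := by
  have hR : 0 < R := hS.trans hSR
  have hπ : (0:ℝ) < Real.pi := Real.pi_pos
  -- continuity of boundary traces
  have hmemR : ∀ x ∈ Icc S R, ((x, 0) : ℝ × ℝ) ∈ closure (Ann S R) := by
    intro x hx
    have := toPolar_mem_closure S R hS hR hSR (q := (x, 0)) ⟨hx, ⟨le_refl 0, hπ.le⟩⟩
    simpa [toPolar] using this
  have hmemL : ∀ x ∈ Icc (-R) (-S), ((x, 0) : ℝ × ℝ) ∈ closure (Ann S R) := by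
    intro x hx
    have h1 : -x ∈ Icc S R := ⟨by linarith [hx.2], by linarith [hx.1]⟩
    have := toPolar_mem_closure S R hS hR hSR (q := (-x, Real.pi)) ⟨h1, ⟨hπ.le, le_refl _⟩⟩
    simpa [toPolar] using this
  have hVr : ContinuousOn (fun x : ℝ => V (x, 0)) (Icc S R) :=
    hVc.comp (continuous_id.prodMk continuous_const).continuousOn hmemR
  have hVl : ContinuousOn (fun x : ℝ => V (x, 0)) (Icc (-R) (-S)) :=
    hVc.comp (continuous_id.prodMk continuous_const).continuousOn hmemL
  have hVrn : ContinuousOn (fun x : ℝ => V (-x, 0)) (Icc S R) := by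
    refine hVc.comp (continuous_id.neg.prodMk continuous_const).continuousOn ?_
    intro x hx
    exact hmemL (-x) ⟨by linarith [hx.2], by linarith [hx.1]⟩
  -- pointwise forms
  have hfr : ∀ x ∈ Icc S R,
      |V (x, 0) - (2 / Real.pi) * theta0 (x, 0) + 1| / |x| = (V (x, 0) + 1) / x := by
    intro x hx
    have hx0 : 0 < x := lt_of_lt_of_le hS hx.1
    have ht : theta0 (x, 0) = 0 := by simp [theta0, lt_irrefl, hx0]
    have hVx : |V (x, 0)| ≤ 1 :=
      hVb x (by rw [abs_of_pos hx0]; exact hx.1) (by rw [abs_of_pos hx0]; exact hx.2)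
    have h1 : (0:ℝ) ≤ V (x, 0) + 1 := by
      have := neg_le_of_abs_le hVx; linarith
    rw [ht, mul_zero, sub_zero, abs_of_pos hx0, abs_of_nonneg h1]
  have hfl : ∀ x ∈ Icc (-R) (-S),
      |V (x, 0) - (2 / Real.pi) * theta0 (x, 0) + 1| / |x| = (1 - V (x, 0)) / (-x) := by
    intro x hx
    have hx0 : x < 0 := lt_of_le_of_lt hx.2 (by linarith)
    have ht : theta0 (x, 0) = Real.pi := by
      simp [theta0, lt_irrefl, not_lt.2 hx0.le]
    have hVx : |V (x, 0)| ≤ 1 :=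
      hVb x (by rw [abs_of_neg hx0]; linarith [hx.2]) (by rw [abs_of_neg hx0]; linarith [hx.1])
    have h2 : (2 / Real.pi) * Real.pi = 2 := by field_simp
    have h1 : V (x, 0) - 2 + 1 ≤ 0 := by
      have := le_of_abs_le hVx; linarith
    rw [ht, h2, abs_of_neg hx0, abs_of_nonpos h1]
    ring_nf
  -- set decomposition
  have hset : {x : ℝ | S ≤ |x| ∧ |x| ≤ R} = Icc (-R) (-S) ∪ Icc S R := by
    ext x
    simp only [mem_setOf_eq, mem_union, mem_Icc]
    rcases le_or_gt 0 x with h | h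
    · rw [abs_of_nonneg h]
      constructor
      · rintro ⟨h1, h2⟩; exact Or.inr ⟨h1, h2⟩
      · rintro (⟨h1, h2⟩ | ⟨h1, h2⟩) <;> constructor <;> linarith
    · rw [abs_of_neg h]
      constructor
      · rintro ⟨h1, h2⟩; exact Or.inl ⟨by linarith, by linarith⟩
      · rintro (⟨h1, h2⟩ | ⟨h1, h2⟩) <;> constructor <;> linarith
  -- integrability of the two pieces
  have hIr : IntegrableOn (fun x => (V (x, 0) + 1) / x) (Icc S R) := by
    refine ((hVr.add continuousOn_const).div continuousOn_id ?_).integrableOn_Icc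
    intro x hx; exact ne_of_gt (lt_of_lt_of_le hS hx.1)
  have hIl : IntegrableOn (fun x => (1 - V (x, 0)) / (-x)) (Icc (-R) (-S)) := by
    refine ((continuousOn_const.sub hVl).div continuousOn_id.neg ?_).integrableOn_Icc
    intro x hx
    have : x < 0 := lt_of_le_of_lt hx.2 (by linarith)
    simp only [Pi.neg_apply, id]
    exact ne_of_gt (by linarith)
  have hdisj : Disjoint (Icc (-R) (-S)) (Icc S R) := by
    rw [Set.disjoint_left]
    intro x hx1 hx2
    have := hx1.2; have := hx2.1; linarith
  rw [hset, setIntegral_union hdisj measurableSet_Icc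
    (hIl.congr_fun (fun x hx => (hfl x hx).symm) measurableSet_Icc)
    (hIr.congr_fun (fun x hx => (hfr x hx).symm) measurableSet_Icc),
    setIntegral_congr_fun measurableSet_Icc hfl, setIntegral_congr_fun measurableSet_Icc hfr]
  -- convert to interval integrals
  have eL : ∫ x in Icc (-R) (-S), (1 - V (x, 0)) / (-x)
      = ∫ x in S..R, (1 - V (-x, 0)) / x := by
    rw [integral_Icc_eq_integral_Ioo, ← integral_Ioc_eq_integral_Ioo,
      ← intervalIntegral.integral_of_le (by linarith : -R ≤ -S)]
    rw [show R = -(-R) by ring, show S = -(-S) by ring]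
    rw [← intervalIntegral.integral_comp_neg (fun x => (1 - V (x, 0)) / (-x))]
    simp
  have eR : ∫ x in Icc S R, (V (x, 0) + 1) / x = ∫ x in S..R, (V (x, 0) + 1) / x := by
    rw [integral_Icc_eq_integral_Ioo, ← integral_Ioc_eq_integral_Ioo,
      ← intervalIntegral.integral_of_le hSR.le]
  have eD : ∫ r in Ioo S R, (V (-r, 0) - V (r, 0)) / r
      = ∫ x in S..R, (V (-x, 0) - V (x, 0)) / x := by
    rw [← integral_Ioc_eq_integral_Ioo, ← intervalIntegral.integral_of_le hSR.le]
  rw [eL, eR, eD]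
  -- interval integrability
  have hIccuIcc : uIcc S R = Icc S R := uIcc_of_le hSR.le
  have hne : ∀ x ∈ Icc S R, x ≠ 0 := fun x hx => ne_of_gt (lt_of_lt_of_le hS hx.1)
  have hiL : IntervalIntegrable (fun x => (1 - V (-x, 0)) / x) volume S R := by
    apply ContinuousOn.intervalIntegrable
    rw [hIccuIcc]
    exact (continuousOn_const.sub hVrn).div continuousOn_id hne
  have hiR : IntervalIntegrable (fun x => (V (x, 0) + 1) / x) volume S R := by
    apply ContinuousOn.intervalIntegrable
    rw [hIccuIcc]
    exact (hVr.add continuousOn_const).div continuousOn_id hne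
  have hiI : IntervalIntegrable (fun x : ℝ => 2 * x⁻¹) volume S R := by
    apply ContinuousOn.intervalIntegrable
    rw [hIccuIcc]
    exact continuousOn_const.mul (continuousOn_id.inv₀ hne)
  have hiD : IntervalIntegrable (fun x => (V (-x, 0) - V (x, 0)) / x) volume S R := by
    apply ContinuousOn.intervalIntegrable
    rw [hIccuIcc]
    exact (hVrn.sub hVr).div continuousOn_id hne
  have key : (∫ x in S..R, (1 - V (-x, 0)) / x) + ∫ x in S..R, (V (x, 0) + 1) / x
      = ∫ x in S..R, (2 * x⁻¹ - (V (-x, 0) - V (x, 0)) / x) := by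
    rw [← intervalIntegral.integral_add hiL hiR]
    refine intervalIntegral.integral_congr fun x hx => ?_
    rw [hIccuIcc] at hx
    have hx0 : x ≠ 0 := hne x hx
    field_simp
    ring
  rw [key, intervalIntegral.integral_sub hiI hiD, intervalIntegral.integral_const_mul,
    integral_inv (by rw [hIccuIcc]; rintro ⟨h0, _⟩; exact absurd h0 (not_le.2 hS))]

lemma measurable_uX : Measurable uX := by
  unfold uX
  exact (measurable_snd.neg.div ((measurable_fst.pow_const 2).add
    (measurable_snd.pow_const 2))).const_mul _

lemma measurable_uY : Measurable uY := by
  unfold uY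
  exact (measurable_fst.div ((measurable_fst.pow_const 2).add
    (measurable_snd.pow_const 2))).const_mul _

set_option maxHeartbeats 1000000 in
/-- Energy decomposition of a function with values in `[-1,1]` on the boundary of the
upper half-annulus `A⁺` of radii `S < R`, with respect to the harmonic map
`(2/π)θ⁰ - 1`. -/
theorem half_annulus_energy_decomposition
    (S R : ℝ) (hS : 0 < S) (hSR : S < R)
    (V : ℝ × ℝ → ℝ)
    (A : Set (ℝ × ℝ))
    (hA : A = {p : ℝ × ℝ | 0 < p.2 ∧ S ^ 2 < p.1 ^ 2 + p.2 ^ 2 ∧ p.1 ^ 2 + p.2 ^ 2 < R ^ 2})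
    (hVc : ContinuousOn V (closure A))
    (hVd : DifferentiableOn ℝ V A)
    (hVb : ∀ x : ℝ, S ≤ |x| → |x| ≤ R → |V (x, 0)| ≤ 1)
    (hint : IntegrableOn (fun p => (fderiv ℝ V p (1, 0)) ^ 2 + (fderiv ℝ V p (0, 1)) ^ 2) A) :
    (1 / 2) * (∫ p in A, ((fderiv ℝ V p (1, 0)) ^ 2 + (fderiv ℝ V p (0, 1)) ^ 2))
      = (2 / Real.pi) * Real.log (R / S)
        - (2 / Real.pi) *
            (∫ x in {x : ℝ | S ≤ |x| ∧ |x| ≤ R},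
              |V (x, 0) - (2 / Real.pi) * theta0 (x, 0) + 1| / |x|)
        + (1 / 2) *
            (∫ p in A,
              ((fderiv ℝ V p (1, 0) - fderiv ℝ (fun w => (2 / Real.pi) * theta0 w) p (1, 0)) ^ 2
                + (fderiv ℝ V p (0, 1) - fderiv ℝ (fun w => (2 / Real.pi) * theta0 w) p (0, 1)) ^ 2)) := by
  have hR : 0 < R := hS.trans hSR
  have hA' : A = Ann S R := hA
  rw [hA'] at hVc hVd hint ⊢
  clear hA hA'
  -- replace fderiv of the comparison map by explicit formulas
  have hderiv1 : ∀ p ∈ Ann S R,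
      fderiv ℝ (fun w => (2 / Real.pi) * theta0 w) p (1, 0) = uX p :=
    fun p hp => u_fderiv_apply₁ p hp.1
  have hderiv2 : ∀ p ∈ Ann S R,
      fderiv ℝ (fun w => (2 / Real.pi) * theta0 w) p (0, 1) = uY p :=
    fun p hp => u_fderiv_apply₂ p hp.1
  have hthird : (∫ p in Ann S R,
      ((fderiv ℝ V p (1, 0) - fderiv ℝ (fun w => (2 / Real.pi) * theta0 w) p (1, 0)) ^ 2
        + (fderiv ℝ V p (0, 1) - fderiv ℝ (fun w => (2 / Real.pi) * theta0 w) p (0, 1)) ^ 2))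
      = ∫ p in Ann S R,
          ((fderiv ℝ V p (1, 0) - uX p) ^ 2 + (fderiv ℝ V p (0, 1) - uY p) ^ 2) :=
    setIntegral_congr_fun (isOpen_Ann S R).measurableSet
      (fun p hp => by rw [hderiv1 p hp, hderiv2 p hp])
  -- integrability of the cross term
  have hcross_int : IntegrableOn
      (fun p => fderiv ℝ V p (1, 0) * uX p + fderiv ℝ V p (0, 1) * uY p) (Ann S R) := by
    have hg : IntegrableOn
        (fun p => (1/2) * ((fderiv ℝ V p (1, 0)) ^ 2 + (fderiv ℝ V p (0, 1)) ^ 2)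
          + (1/2) * (uX p ^ 2 + uY p ^ 2)) (Ann S R) :=
      (hint.const_mul (1/2)).add ((integrableOn_uSq S R hS).const_mul (1/2))
    have hm : AEStronglyMeasurable
        (fun p => fderiv ℝ V p (1, 0) * uX p + fderiv ℝ V p (0, 1) * uY p)
        (volume.restrict (Ann S R)) :=
      Measurable.aestronglyMeasurable
        (((measurable_fderiv_apply_const ℝ V _).mul measurable_uX).add
          ((measurable_fderiv_apply_const ℝ V _).mul measurable_uY))
    refine hg.mono' hm ?_
    refine Filter.Eventually.of_forall fun p => ?_
    rw [Real.norm_eq_abs, abs_le]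
    constructor <;>
      nlinarith [sq_nonneg (fderiv ℝ V p (1, 0) - uX p), sq_nonneg (fderiv ℝ V p (1, 0) + uX p),
        sq_nonneg (fderiv ℝ V p (0, 1) - uY p), sq_nonneg (fderiv ℝ V p (0, 1) + uY p)]
  -- expansion of the relative energy
  have hsplit : (∫ p in Ann S R,
      ((fderiv ℝ V p (1, 0) - uX p) ^ 2 + (fderiv ℝ V p (0, 1) - uY p) ^ 2))
      = (∫ p in Ann S R, ((fderiv ℝ V p (1, 0)) ^ 2 + (fderiv ℝ V p (0, 1)) ^ 2))
        - 2 * (∫ p in Ann S R, (fderiv ℝ V p (1, 0) * uX p + fderiv ℝ V p (0, 1) * uY p))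
        + ∫ p in Ann S R, (uX p ^ 2 + uY p ^ 2) := by
    have e : ∀ p : ℝ × ℝ,
        (fderiv ℝ V p (1, 0) - uX p) ^ 2 + (fderiv ℝ V p (0, 1) - uY p) ^ 2
          = (((fderiv ℝ V p (1, 0)) ^ 2 + (fderiv ℝ V p (0, 1)) ^ 2)
              - 2 * (fderiv ℝ V p (1, 0) * uX p + fderiv ℝ V p (0, 1) * uY p))
            + (uX p ^ 2 + uY p ^ 2) := fun p => by ring
    have h2 : IntegrableOn
        (fun p => 2 * (fderiv ℝ V p (1, 0) * uX p + fderiv ℝ V p (0, 1) * uY p)) (Ann S R) :=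
      hcross_int.const_mul 2
    have hsub : IntegrableOn
        (fun p => ((fderiv ℝ V p (1, 0)) ^ 2 + (fderiv ℝ V p (0, 1)) ^ 2)
          - 2 * (fderiv ℝ V p (1, 0) * uX p + fderiv ℝ V p (0, 1) * uY p)) (Ann S R) :=
      hint.sub h2
    rw [show (∫ p in Ann S R,
        ((fderiv ℝ V p (1, 0) - uX p) ^ 2 + (fderiv ℝ V p (0, 1) - uY p) ^ 2))
        = ∫ p in Ann S R,
            ((((fderiv ℝ V p (1, 0)) ^ 2 + (fderiv ℝ V p (0, 1)) ^ 2)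
              - 2 * (fderiv ℝ V p (1, 0) * uX p + fderiv ℝ V p (0, 1) * uY p))
            + (uX p ^ 2 + uY p ^ 2)) from by simp only [e]]
    rw [integral_add hsub (integrableOn_uSq S R hS), integral_sub hint h2,
      MeasureTheory.integral_const_mul]
  rw [hthird, hsplit, boundary_integral S R hS hSR V hVc hVb,
    cross_integral S R hS hSR V hVc hVd hcross_int, integral_uSq S R hS hSR]
  ring
end

section
/- The function t ↦ t³/sinh(αt) is strictly decreasing on the set {t > 0 : αt ≥ t₀}, where t₀ is the unique positive solution of t = 3·tanh(t), and α > 0. -/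
open Real

private lemma tanh_lt_one' (x : ℝ) : Real.tanh x < 1 := by
  rw [Real.tanh_eq_sinh_div_cosh, div_lt_one (Real.cosh_pos x)]
  exact Real.sinh_lt_cosh x

private lemma continuous_tanh' : Continuous Real.tanh := by
  have : Real.tanh = fun x => Real.sinh x / Real.cosh x := by
    funext x; exact Real.tanh_eq_sinh_div_cosh x
  rw [this]
  exact Real.continuous_sinh.div Real.continuous_cosh fun x => (Real.cosh_pos x).ne'

/-- The function `t ↦ t³/sinh(αt)` is strictly decreasing on `{t > 0 : αt ≥ t₀}`, where
`t₀` is the unique positive solution of `t = 3 tanh t` and `α > 0`. -/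
theorem cube_div_sinh_strictAnti
    (α t₀ : ℝ) (hα : 0 < α) (ht₀ : 0 < t₀) (ht₀eq : t₀ = 3 * Real.tanh t₀)
    (ht₀uniq : ∀ s : ℝ, 0 < s → s = 3 * Real.tanh s → s = t₀) :
    StrictAntiOn (fun t : ℝ => t ^ 3 / Real.sinh (α * t))
      {t : ℝ | 0 < t ∧ t₀ ≤ α * t} := by
  -- key: for x > t₀, 3 tanh x < x
  have key : ∀ x : ℝ, t₀ < x → 3 * Real.tanh x < x := by
    intro x hx
    by_contra h
    push_neg at h
    rcases eq_or_lt_of_le h with heq | hlt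
    · have := ht₀uniq x (ht₀.trans hx) heq
      exact absurd this (ne_of_gt hx)
    · -- g y = y - 3 tanh y; g x < 0, g M > 0 for M large
      set g : ℝ → ℝ := fun y => y - 3 * Real.tanh y with hg
      have hgx : g x < 0 := by simpa [hg] using sub_neg.mpr hlt
      have hcont : Continuous g := continuous_id.sub (continuous_const.mul continuous_tanh')
      set M : ℝ := max x 4 with hM
      have hgM : 0 < g M := by
        have h1 : Real.tanh M < 1 := tanh_lt_one' M
        have h4 : (4 : ℝ) ≤ M := le_max_right _ _
        simp only [hg]
        nlinarith
      have hxM : x ≤ M := le_max_left _ _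
      obtain ⟨c, hc, hgc⟩ := intermediate_value_Icc hxM hcont.continuousOn
        (show (0:ℝ) ∈ Set.Icc (g x) (g M) from ⟨hgx.le, hgM.le⟩)
      have hc0 : c = 3 * Real.tanh c := by
        have : c - 3 * Real.tanh c = 0 := hgc
        linarith
      have hcpos : 0 < c := lt_of_lt_of_le (ht₀.trans hx) hc.1
      have := ht₀uniq c hcpos hc0
      have : t₀ < c := lt_of_lt_of_le hx hc.1
      linarith
  -- the set equals Ici (t₀/α)
  have hset : {t : ℝ | 0 < t ∧ t₀ ≤ α * t} = Set.Ici (t₀ / α) := by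
    ext t
    simp only [Set.mem_setOf_eq, Set.mem_Ici, div_le_iff₀ hα]
    constructor
    · rintro ⟨_, h⟩; linarith [mul_comm α t]
    · intro h
      have h' : t₀ ≤ α * t := by linarith [mul_comm t α]
      exact ⟨lt_of_lt_of_le (div_pos ht₀ hα) ((div_le_iff₀ hα).mpr (by linarith [mul_comm t α])), h'⟩
  rw [hset]
  have hderiv : ∀ t : ℝ, t ∈ interior (Set.Ici (t₀ / α)) →
      HasDerivAt (fun t : ℝ => t ^ 3 / Real.sinh (α * t))
        ((3 * t ^ 2 * Real.sinh (α * t) - t ^ 3 * (Real.cosh (α * t) * α)) /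
          Real.sinh (α * t) ^ 2) t ∧
      (3 * t ^ 2 * Real.sinh (α * t) - t ^ 3 * (Real.cosh (α * t) * α)) /
          Real.sinh (α * t) ^ 2 < 0 := by
    intro t ht
    rw [interior_Ici, Set.mem_Ioi] at ht
    have htpos : 0 < t := lt_trans (div_pos ht₀ hα) ht
    have hx : t₀ < α * t := by
      have := (div_lt_iff₀ hα).mp ht
      linarith [mul_comm t α]
    have hxpos : 0 < α * t := mul_pos hα htpos
    have hs : 0 < Real.sinh (α * t) := Real.sinh_pos_iff.mpr hxpos
    constructor
    · have h1 : HasDerivAt (fun t : ℝ => t ^ 3) (3 * t ^ 2) t := by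
        simpa using hasDerivAt_pow 3 t
      have h2 : HasDerivAt (fun t : ℝ => Real.sinh (α * t)) (Real.cosh (α * t) * α) t := by
        have := (Real.hasDerivAt_sinh (α * t)).comp t
          (((hasDerivAt_id t).const_mul α))
        simpa [Function.comp_def] using this
      exact h1.div h2 hs.ne'
    · apply div_neg_of_neg_of_pos
      · have hch : 0 < Real.cosh (α * t) := Real.cosh_pos _
        have htanh : 3 * Real.tanh (α * t) < α * t := key _ hx
        have hsinh : 3 * Real.sinh (α * t) < (α * t) * Real.cosh (α * t) := by
          rw [Real.tanh_eq_sinh_div_cosh] at htanh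
          have := (div_lt_iff₀ hch).mp (by rw [← mul_div_assoc] at htanh; exact htanh)
          linarith
        nlinarith [pow_pos htpos 2, pow_pos htpos 3]
      · positivity
  exact StrictAntiOn.mono (strictAntiOn_of_deriv_neg (convex_Ici _)
    (fun t ht => by
      have htpos : 0 < t := lt_of_lt_of_le (div_pos ht₀ hα) ht
      have : 0 < Real.sinh (α * t) := Real.sinh_pos_iff.mpr (mul_pos hα htpos)
      exact ((continuousAt_id.pow 3).div
        (Real.continuous_sinh.continuousAt.comp (continuousAt_id.const_mul α)) this.ne').continuousWithinAt)
    (fun t ht => ((hderiv t ht).1.deriv ▸ (hderiv t ht).2))) le_rfl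
end

section
/- Let N ≥ 4, 0 < b < 1, and define g(x) = Π_{k=1}^N |x - k + ib|^{-2/N} for x ∈ ℝ. Then for any integer A with 1 ≤ A ≤ N, g(A) ≥ b^{-2/N}·(N²+1)^{(1/N)-1}, while g(A + 1/2) ≤ 4. -/
open Real Finset

/-- Bounds on `g(x) = Π_{k=1}^N ((x-k)² + b²)^{-1/N}` (the modulus of the derivative of
a Schwarz–Christoffel map along a horizontal line): at integer points `A ∈ [1,N]` one has
`g(A) ≥ b^{-2/N} (N²+1)^{1/N-1}`, while `g(A+1/2) ≤ 4`. -/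
theorem schwarz_christoffel_bounds
    (N : ℕ) (hN : 4 ≤ N) (b : ℝ) (hb : 0 < b) (hb1 : b < 1)
    (A : ℕ) (hA1 : 1 ≤ A) (hAN : A ≤ N) :
    (b ^ (-(2 : ℝ) / N) * ((N : ℝ) ^ 2 + 1) ^ ((1 : ℝ) / N - 1)
        ≤ ∏ k ∈ Finset.Icc 1 N, (((A : ℝ) - k) ^ 2 + b ^ 2) ^ (-(1 : ℝ) / N)) ∧
    (∏ k ∈ Finset.Icc 1 N, (((A : ℝ) + 1 / 2 - k) ^ 2 + b ^ 2) ^ (-(1 : ℝ) / N)) ≤ 4 := by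
  have hNR : (4:ℝ) ≤ N := by exact_mod_cast hN
  have hN0 : (0:ℝ) < N := by linarith
  have hNne : (N:ℝ) ≠ 0 := ne_of_gt hN0
  have hc : -(1:ℝ)/N ≤ 0 := by
    apply div_nonpos_of_nonpos_of_nonneg <;> linarith
  have hAmem : A ∈ Finset.Icc 1 N := Finset.mem_Icc.2 ⟨hA1, hAN⟩
  constructor
  · rw [← Finset.mul_prod_erase _ _ hAmem]
    have h1 : (((A:ℝ) - A) ^ 2 + b ^ 2) ^ (-(1:ℝ)/N) = b ^ (-(2:ℝ)/N) := by
      rw [sub_self]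
      rw [show (0:ℝ)^2 + b^2 = b^2 by ring]
      rw [← Real.rpow_natCast b 2, ← Real.rpow_mul hb.le]
      congr 1
      push_cast
      ring
    rw [h1]
    have hb2 : (0:ℝ) ≤ b ^ (-(2:ℝ)/N) := by positivity
    apply mul_le_mul_of_nonneg_left _ hb2
    have hbase : (0:ℝ) ≤ (N:ℝ)^2 + 1 := by positivity
    calc ((N:ℝ)^2 + 1) ^ ((1:ℝ)/N - 1)
        = ∏ _k ∈ (Finset.Icc 1 N).erase A, ((N:ℝ)^2 + 1) ^ (-(1:ℝ)/N) := by
          rw [Finset.prod_const, Finset.card_erase_of_mem hAmem, Nat.card_Icc,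
            ← Real.rpow_natCast (((N:ℝ)^2 + 1) ^ (-(1:ℝ)/N)), ← Real.rpow_mul hbase]
          congr 1
          have : ((N + 1 - 1 - 1 : ℕ) : ℝ) = (N:ℝ) - 1 := by
            have h1N : 1 ≤ N := by omega
            push_cast [Nat.cast_sub h1N]
            ring
          rw [this]
          field_simp
          ring
      _ ≤ ∏ k ∈ (Finset.Icc 1 N).erase A, (((A:ℝ) - k) ^ 2 + b ^ 2) ^ (-(1:ℝ)/N) := by
          apply Finset.prod_le_prod
          · intro k _; positivity
          · intro k hk
            have hk' : k ∈ Finset.Icc 1 N := Finset.mem_of_mem_erase hk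
            have hk1 : 1 ≤ k := (Finset.mem_Icc.1 hk').1
            have hkN : k ≤ N := (Finset.mem_Icc.1 hk').2
            have hkR : (1:ℝ) ≤ k := by exact_mod_cast hk1
            have hkNR : (k:ℝ) ≤ N := by exact_mod_cast hkN
            have hAR : (1:ℝ) ≤ A := by exact_mod_cast hA1
            have hANR : (A:ℝ) ≤ N := by exact_mod_cast hAN
            apply Real.rpow_le_rpow_of_nonpos (by positivity) _ hc
            nlinarith [sq_nonneg ((A:ℝ) - k), sq_nonneg b]
  · have key : ∀ k ∈ Finset.Icc 1 N,
        (((A:ℝ) + 1/2 - k) ^ 2 + b ^ 2) ^ (-(1:ℝ)/N) ≤ (4:ℝ) ^ ((1:ℝ)/N) := by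
      intro k _
      have hbase : (1:ℝ)/4 ≤ ((A:ℝ) + 1/2 - k) ^ 2 + b ^ 2 := by
        rcases le_or_gt k A with h | h
        · have : (0:ℝ) ≤ (A:ℝ) - k := by
            have := Nat.cast_le (α := ℝ) |>.2 h
            linarith
          nlinarith [sq_nonneg b]
        · have hk : (A:ℝ) + 1 ≤ k := by exact_mod_cast h
          nlinarith [sq_nonneg b]
      have h14 : ((1:ℝ)/4) ^ (-(1:ℝ)/N) = (4:ℝ) ^ ((1:ℝ)/N) := by
        rw [one_div, ← Real.rpow_neg_one (4:ℝ), ← Real.rpow_mul (by norm_num)]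
        congr 1
        ring
      calc (((A:ℝ) + 1/2 - k) ^ 2 + b ^ 2) ^ (-(1:ℝ)/N)
          ≤ ((1:ℝ)/4) ^ (-(1:ℝ)/N) :=
            Real.rpow_le_rpow_of_nonpos (by norm_num) hbase hc
        _ = (4:ℝ) ^ ((1:ℝ)/N) := h14
    calc ∏ k ∈ Finset.Icc 1 N, (((A:ℝ) + 1/2 - k) ^ 2 + b ^ 2) ^ (-(1:ℝ)/N)
        ≤ ∏ _k ∈ Finset.Icc 1 N, (4:ℝ) ^ ((1:ℝ)/N) := by
          apply Finset.prod_le_prod (fun k _ => by positivity) key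
      _ = 4 := by
          rw [Finset.prod_const, Nat.card_Icc,
            ← Real.rpow_natCast ((4:ℝ) ^ ((1:ℝ)/N)), ← Real.rpow_mul (by norm_num)]
          rw [show ((N + 1 - 1 : ℕ) : ℝ) = (N:ℝ) by push_cast; ring]
          rw [show (1:ℝ)/N * N = 1 by field_simp]
          exact Real.rpow_one 4
end
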